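/- arXiv:1501.03640 — 2 statements merged into one kernel-verified Lean document; each statement's English description precedes it below -/
import Mathlib

section
/- Let E ⊆ ℕ and let μ : ℕ → (0,∞) be a scaling function (strictly decreasing with μ(n) → 0). Then the right upper porosity at 0 of the set μ(E) ⊆ ℝ⁺ equals the upper porosity of E at infinity w.r.t. μ: p̄(μ(E)) = p̄_μ(E). -/
open Filter Topology

/-- The length of the largest open subinterval of `(0, h)` containing no point of `E`. -/
noncomputable def lam (E : Set ℝ) (h : ℝ) : ℝ :=
  sSup {l : ℝ | ∃ a b : ℝ, 0 ≤ a ∧ a ≤ b ∧ b ≤ h ∧ Set.Ioo a b ∩ E = ∅ ∧ l = b - a}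

/-- The right upper porosity of `E ⊆ ℝ⁺` at `0`. -/
noncomputable def upperPorosity (E : Set ℝ) : ℝ :=
  Filter.limsup (fun h => lam E h / h) (nhdsWithin 0 (Set.Ioi 0))

/-- `lamMu μ E n`: the analogue of the largest-hole length at infinity, i.e. the supremum
of `μ a - μ b` over `n ≤ a < b` such that no element of `E` lies strictly between `a` and `b`. -/
noncomputable def lamMu (μ : ℕ → ℝ) (E : Set ℕ) (n : ℕ) : ℝ :=
  sSup {d : ℝ | ∃ a b : ℕ, n ≤ a ∧ a < b ∧ (∀ m : ℕ, a < m → m < b → m ∉ E) ∧ d = μ a - μ b}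

/-- The upper porosity of `E` at infinity w.r.t. the scaling function `μ`. -/
noncomputable def upperPorosityInf (μ : ℕ → ℝ) (E : Set ℕ) : ℝ :=
  Filter.limsup (fun n => lamMu μ E n / μ n) Filter.atTop

/-- The lower porosity of `E` at infinity w.r.t. the scaling function `μ`. -/
noncomputable def lowerPorosityInf (μ : ℕ → ℝ) (E : Set ℕ) : ℝ :=
  Filter.liminf (fun n => lamMu μ E n / μ n) Filter.atTop

/-- The set of porosity numbers of `E` at infinity w.r.t. `μ`. -/
def porosityNumbersInf (μ : ℕ → ℝ) (E : Set ℕ) : Set ℝ :=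
  {p : ℝ | ∃ n : ℕ → ℕ, StrictMono n ∧
    Tendsto (fun k => lamMu μ E (n k) / μ (n k)) atTop (nhds p)}

/-!
Every gap `(μ b, μ a)` between consecutive points of `μ(E)` below `μ n` is a hole of `μ(E)` in
`(0, μ n)`, so `λ_μ(E, n) ≤ λ(μ(E), μ n)` and `p̄_μ(E) ≤ p̄(μ(E))`. Conversely, given
`μ (n + 1) < h ≤ μ n`, let `(x, y)` be a hole of `μ(E)` in `(0, h)` and let `a ≥ n` be the
index with `μ (a + 1) < y ≤ μ a`. Every point of `E` beyond `a` has `μ`-value at most `x`, so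
`y - x ≤ μ a - x ≤ λ_μ(E, a)`. If `a > n` this is at most
`λ_μ(E, n + 1) ≤ h · λ_μ(E, n + 1) / μ (n + 1)`; if `a = n` then
`y - x ≤ h - x ≤ h · (μ n - x) / μ n ≤ h · λ_μ(E, n) / μ n`. Hence `λ(μ(E), h) / h` is bounded
by the larger of the two ratios at `n` and `n + 1`.
-/

open Set

section lam

variable {S : Set ℝ} {h : ℝ}

lemma bddAbove_lam_set (S : Set ℝ) (h : ℝ) :
    BddAbove {l : ℝ | ∃ a b : ℝ, 0 ≤ a ∧ a ≤ b ∧ b ≤ h ∧ Ioo a b ∩ S = ∅ ∧ l = b - a} := by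
  refine ⟨h, ?_⟩
  rintro l ⟨a, b, ha, -, hb, -, rfl⟩
  linarith

lemma sub_le_lam {a b : ℝ} (ha : 0 ≤ a) (hab : a ≤ b) (hb : b ≤ h) (hS : Ioo a b ∩ S = ∅) :
    b - a ≤ lam S h :=
  le_csSup (bddAbove_lam_set S h) ⟨a, b, ha, hab, hb, hS, rfl⟩

lemma lam_nonneg (hh : 0 ≤ h) : 0 ≤ lam S h := by
  simpa using sub_le_lam (S := S) le_rfl le_rfl hh (by simp)

lemma lam_le_of_forall_sub_le {c : ℝ} (hh : 0 ≤ h) (hc : 0 ≤ c)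
    (H : ∀ a b, 0 ≤ a → a < b → b ≤ h → Ioo a b ∩ S = ∅ → b - a ≤ c) : lam S h ≤ c := by
  refine csSup_le ⟨0, 0, 0, le_rfl, le_rfl, hh, by simp, by ring⟩ ?_
  rintro l ⟨a, b, ha, hab, hb, hS, rfl⟩
  rcases hab.lt_or_eq with hab | rfl
  · exact H a b ha hab hb hS
  · simpa using hc

lemma lam_le (hh : 0 ≤ h) : lam S h ≤ h :=
  lam_le_of_forall_sub_le hh hh fun _ _ ha _ hb _ => by linarith

lemma lam_div_mem_Icc (hh : 0 < h) : lam S h / h ∈ Icc 0 1 :=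
  ⟨div_nonneg (lam_nonneg hh.le) hh.le, div_le_one_of_le₀ (lam_le hh.le) hh.le⟩

end lam

section lamMu

variable {μ : ℕ → ℝ} {E : Set ℕ} {n : ℕ}

lemma bddAbove_lamMu_set (hμ : Antitone μ) (hμnonneg : ∀ n, 0 ≤ μ n) (n : ℕ) :
    BddAbove {d : ℝ | ∃ a b : ℕ, n ≤ a ∧ a < b ∧ (∀ m : ℕ, a < m → m < b → m ∉ E) ∧
      d = μ a - μ b} := by
  refine ⟨μ n, ?_⟩
  rintro d ⟨a, b, hna, -, -, rfl⟩
  linarith [hμ hna, hμnonneg b]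

lemma sub_le_lamMu (hμ : Antitone μ) (hμnonneg : ∀ n, 0 ≤ μ n) {a b : ℕ} (hna : n ≤ a)
    (hab : a < b) (hgap : ∀ m, a < m → m < b → m ∉ E) : μ a - μ b ≤ lamMu μ E n :=
  le_csSup (bddAbove_lamMu_set hμ hμnonneg n) ⟨a, b, hna, hab, hgap, rfl⟩

lemma lamMu_nonneg (hμ : Antitone μ) (hμnonneg : ∀ n, 0 ≤ μ n) : 0 ≤ lamMu μ E n := by
  have := sub_le_lamMu (E := E) hμ hμnonneg le_rfl n.lt_succ_self fun m h1 h2 => by omega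
  linarith [hμ n.le_succ]

lemma lamMu_le (hμ : Antitone μ) (hμnonneg : ∀ n, 0 ≤ μ n) : lamMu μ E n ≤ μ n := by
  refine csSup_le ⟨_, n, n + 1, le_rfl, n.lt_succ_self, fun m h1 h2 => by omega, rfl⟩ ?_
  rintro d ⟨a, b, hna, -, -, rfl⟩
  linarith [hμ hna, hμnonneg b]

lemma lamMu_div_mem_Icc (hμ : Antitone μ) (hμpos : ∀ n, 0 < μ n) :
    lamMu μ E n / μ n ∈ Icc 0 1 :=
  have hμnonneg n := (hμpos n).le
  ⟨div_nonneg (lamMu_nonneg hμ hμnonneg) (hμnonneg n),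
    div_le_one_of_le₀ (lamMu_le hμ hμnonneg) (hμnonneg n)⟩

/-- The gap after `a` may be unbounded; it is then approximated by the gaps `(a, b)`, `b → ∞`. -/
lemma sub_le_lamMu_of_forall_mem_le (hμ : Antitone μ) (hμnonneg : ∀ n, 0 ≤ μ n)
    (hlim : Tendsto μ atTop (𝓝 0)) {a : ℕ} {x : ℝ} (hx : 0 ≤ x) (hna : n ≤ a)
    (hE : ∀ m ∈ E, a < m → μ m ≤ x) : μ a - x ≤ lamMu μ E n := by
  classical
  by_cases hb : ∃ b, a < b ∧ b ∈ E
  · obtain ⟨hab, hbE⟩ := Nat.find_spec hb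
    have hgap : ∀ m, a < m → m < Nat.find hb → m ∉ E :=
      fun m ham hmb hmE => Nat.find_min hb hmb ⟨ham, hmE⟩
    linarith [sub_le_lamMu hμ hμnonneg hna hab hgap, hE _ hbE hab]
  · simp only [not_exists, not_and] at hb
    have hμa : μ a ≤ lamMu μ E n := by
      refine le_of_tendsto (by simpa using tendsto_const_nhds.sub hlim) ?_
      filter_upwards [eventually_gt_atTop a] with b hab
      exact sub_le_lamMu hμ hμnonneg hna hab fun m ham _ => hb m ham
    linarith

lemma lamMu_le_lam_image (hμ : Antitone μ) (hμnonneg : ∀ n, 0 ≤ μ n) :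
    lamMu μ E n ≤ lam (μ '' E) (μ n) := by
  refine csSup_le ⟨_, n, n + 1, le_rfl, n.lt_succ_self, fun m h1 h2 => by omega, rfl⟩ ?_
  rintro d ⟨a, b, hna, hab, hgap, rfl⟩
  refine sub_le_lam (hμnonneg b) (hμ hab.le) (hμ hna) ?_
  rw [eq_empty_iff_forall_notMem]
  rintro _ ⟨⟨hbm, hma⟩, m, hmE, rfl⟩
  exact hgap m (hμ.reflect_lt hma) (hμ.reflect_lt hbm) hmE

lemma exists_apply_succ_lt_le_apply (hlim : Tendsto μ atTop (𝓝 0)) {y : ℝ}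
    (hy : 0 < y) (hyn : y ≤ μ n) : ∃ a, n ≤ a ∧ μ (a + 1) < y ∧ y ≤ μ a := by
  classical
  have hex : ∃ a, n ≤ a ∧ μ (a + 1) < y := by
    obtain ⟨k, hk⟩ := (hlim.eventually (gt_mem_nhds hy)).exists_forall_of_atTop
    exact ⟨max n k, le_max_left _ _, hk _ (by omega)⟩
  obtain ⟨hna, hlt⟩ := Nat.find_spec hex
  refine ⟨Nat.find hex, hna, hlt, ?_⟩
  rcases hna.eq_or_lt with heq | hlt'
  · rwa [← heq]
  · have hmin := Nat.find_min hex (Nat.sub_one_lt_of_lt hlt')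
    rw [Nat.sub_add_cancel (Nat.one_le_of_lt hlt')] at hmin
    exact not_lt.mp fun hlt'' => hmin ⟨by omega, hlt''⟩

lemma sub_le_of_Ioo_inter_image_eq_empty (hμ : Antitone μ) (hμpos : ∀ n, 0 < μ n)
    (hlim : Tendsto μ atTop (𝓝 0)) {h x y : ℝ} (hnh : μ (n + 1) < h) (hhn : h ≤ μ n)
    (hx : 0 ≤ x) (hxy : x < y) (hyh : y ≤ h) (hhole : Ioo x y ∩ μ '' E = ∅) :
    y - x ≤ h * max (lamMu μ E n / μ n) (lamMu μ E (n + 1) / μ (n + 1)) := by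
  have hμnonneg n := (hμpos n).le
  obtain ⟨a, hna, hay, hya⟩ :=
    exists_apply_succ_lt_le_apply hlim (hx.trans_lt hxy) (hyh.trans hhn)
  have hE : ∀ m ∈ E, a < m → μ m ≤ x := by
    intro m hmE ham
    by_contra! hxm
    exact (eq_empty_iff_forall_notMem.mp hhole) (μ m)
      ⟨⟨hxm, (hμ ham).trans_lt hay⟩, m, hmE, rfl⟩
  have hh : 0 ≤ h := hx.trans (hxy.le.trans hyh)
  rcases hna.eq_or_lt with rfl | hna
  · have hgap := sub_le_lamMu_of_forall_mem_le hμ hμnonneg hlim hx le_rfl hE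
    have hxh : h * x ≤ μ n * x := mul_le_mul_of_nonneg_right hhn hx
    calc y - x ≤ h * ((μ n - x) / μ n) := by
          rw [mul_div_assoc', le_div_iff₀ (hμpos n)]; nlinarith
      _ ≤ h * (lamMu μ E n / μ n) := by gcongr; exact hμnonneg n
      _ ≤ _ := mul_le_mul_of_nonneg_left (le_max_left _ _) hh
  · have hgap := sub_le_lamMu_of_forall_mem_le hμ hμnonneg hlim hx hna hE
    calc y - x ≤ lamMu μ E (n + 1) := by linarith
      _ = μ (n + 1) * (lamMu μ E (n + 1) / μ (n + 1)) := by field_simp [(hμpos _).ne']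
      _ ≤ h * (lamMu μ E (n + 1) / μ (n + 1)) := by
          gcongr; exact (lamMu_div_mem_Icc hμ hμpos).1
      _ ≤ _ := mul_le_mul_of_nonneg_left (le_max_right _ _) hh

lemma lam_image_div_le (hμ : Antitone μ) (hμpos : ∀ n, 0 < μ n)
    (hlim : Tendsto μ atTop (𝓝 0)) {h : ℝ} (hnh : μ (n + 1) < h) (hhn : h ≤ μ n) :
    lam (μ '' E) h / h ≤ max (lamMu μ E n / μ n) (lamMu μ E (n + 1) / μ (n + 1)) := by
  have hh : 0 < h := (hμpos _).trans hnh
  rw [div_le_iff₀' hh]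
  refine lam_le_of_forall_sub_le hh.le ?_ fun x y hx hxy hyh hhole =>
    sub_le_of_Ioo_inter_image_eq_empty hμ hμpos hlim hnh hhn hx hxy hyh hhole
  exact mul_nonneg hh.le ((lamMu_div_mem_Icc hμ hμpos).1.trans (le_max_left _ _))

lemma upperPorosityInf_le_upperPorosity_image (hμ : Antitone μ) (hμpos : ∀ n, 0 < μ n)
    (hlim : Tendsto μ atTop (𝓝 0)) : upperPorosityInf μ E ≤ upperPorosity (μ '' E) := by
  have hμnonneg n := (hμpos n).le
  have hpos : ∀ᶠ h in 𝓝[>] (0 : ℝ), 0 < h := self_mem_nhdsWithin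
  have hmap : Tendsto μ atTop (𝓝[>] 0) :=
    tendsto_nhdsWithin_iff.mpr ⟨hlim, Eventually.of_forall hμpos⟩
  calc upperPorosityInf μ E ≤ limsup (fun n => lam (μ '' E) (μ n) / μ n) atTop := by
        refine limsup_le_limsup (Eventually.of_forall fun n => ?_)
          (isBoundedUnder_of_eventually_ge (a := 0) (.of_forall fun n =>
            (lamMu_div_mem_Icc hμ hμpos).1)).isCoboundedUnder_le
          (isBoundedUnder_of_eventually_le (a := 1) (.of_forall fun n =>
            (lam_div_mem_Icc (hμpos n)).2))
        exact div_le_div_of_nonneg_right (lamMu_le_lam_image hμ hμnonneg) (hμnonneg n)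
    _ ≤ upperPorosity (μ '' E) := by
        rw [← Function.comp_def (fun h => lam (μ '' E) h / h), limsup_comp]
        refine limsup_le_limsup_of_le hmap
          (isBoundedUnder_of_eventually_ge (a := 0) ((hmap.eventually hpos).mono fun n hn =>
            (lam_div_mem_Icc hn).1)).isCoboundedUnder_le
          (isBoundedUnder_of_eventually_le (a := 1) (hpos.mono fun h hh =>
            (lam_div_mem_Icc hh).2))

lemma upperPorosity_image_le_upperPorosityInf (hμ : Antitone μ) (hμpos : ∀ n, 0 < μ n)
    (hlim : Tendsto μ atTop (𝓝 0)) : upperPorosity (μ '' E) ≤ upperPorosityInf μ E := by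
  have hpos : ∀ᶠ h in 𝓝[>] (0 : ℝ), 0 < h := self_mem_nhdsWithin
  refine le_of_forall_gt_imp_ge_of_dense fun c hc => ?_
  obtain ⟨N, hN⟩ := eventually_atTop.mp <| eventually_lt_of_limsup_lt hc
    (isBoundedUnder_of_eventually_le (a := 1) (.of_forall fun n =>
      (lamMu_div_mem_Icc hμ hμpos).2))
  refine limsup_le_of_le (isBoundedUnder_of_eventually_ge (a := 0)
    (hpos.mono fun h hh => (lam_div_mem_Icc hh).1)).isCoboundedUnder_le ?_
  filter_upwards [Ioc_mem_nhdsGT (hμpos N)] with h ⟨hh, hhN⟩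
  obtain ⟨n, hNn, hnh, hhn⟩ := exists_apply_succ_lt_le_apply hlim hh hhN
  exact (lam_image_div_le hμ hμpos hlim hnh hhn).trans
    (max_le (hN n hNn).le (hN (n + 1) (by omega)).le)

end lamMu

theorem upperPorosity_image_eq_upperPorosityInf
    (E : Set ℕ) (μ : ℕ → ℝ) (hμanti : StrictAnti μ) (hμpos : ∀ n, 0 < μ n)
    (hμ0 : Tendsto μ atTop (nhds 0)) :
    upperPorosity (μ '' E) = upperPorosityInf μ E :=
  le_antisymm (upperPorosity_image_le_upperPorosityInf hμanti.antitone hμpos hμ0)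
    (upperPorosityInf_le_upperPorosity_image hμanti.antitone hμpos hμ0)
end

section
/- Let μ₁, μ₂ : ℕ → (0,∞) be scaling functions such that lim_{n,m→∞} (μ₁(n)μ₂(m))/(μ₂(n)μ₁(m)) = 1. Then for every E ⊆ ℕ the sets of porosity numbers at infinity coincide: P_{μ₁}(E) = P_{μ₂}(E). -/
/-!
Normalised by `μ n`, the quantity `lamMu μ E n` is the supremum of `μ a / μ n - μ b / μ n` over
the holes `(a, b)` of `E` beyond `n`. The double limit condition says that for `m ≥ n ≥ N` the
ratios `μ₂ m / μ₂ n` and `μ₁ m / μ₁ n` agree up to a factor close to `1`; as both lie in `(0, 1]`,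
they are then uniformly close, so the two normalised suprema differ by `o(1)`. Sequences whose
difference tends to `0` have the same subsequential limits.
-/

open Filter Topology

lemma abs_sub_lt_of_abs_div_sub_one_lt {x y ε : ℝ} (hx : 0 < x) (hx₁ : x ≤ 1)
    (h : |y / x - 1| < ε) : |y - x| < ε :=
  calc |y - x| = x * |y / x - 1| := by
        rw [← abs_of_pos hx, ← abs_mul, abs_of_pos hx, mul_sub, mul_div_cancel₀ _ hx.ne', mul_one]
    _ ≤ |y / x - 1| := mul_le_of_le_one_left (abs_nonneg _) hx₁
    _ < ε := h

def DoubleLimitCondition (μ₁ μ₂ : ℕ → ℝ) : Prop :=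
  ∀ ε > (0 : ℝ), ∃ N : ℕ, ∀ n ≥ N, ∀ m ≥ N, |μ₁ n * μ₂ m / (μ₂ n * μ₁ m) - 1| < ε

section

variable {μ μ₁ μ₂ : ℕ → ℝ} {E : Set ℕ} {n : ℕ}

theorem DoubleLimitCondition.symm (h : DoubleLimitCondition μ₁ μ₂) :
    DoubleLimitCondition μ₂ μ₁ := by
  intro ε hε
  obtain ⟨δ, hδ, hinv⟩ :=
    Metric.continuousAt_iff.mp (continuousAt_inv₀ (one_ne_zero (α := ℝ))) ε hε
  obtain ⟨N, hN⟩ := h δ hδ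
  refine ⟨N, fun n hn m hm => ?_⟩
  simpa only [Real.dist_eq, inv_div, inv_one] using hinv (hN n hn m hm)

lemma le_lamMu (hμ : Antitone μ) (hμpos : ∀ k, 0 ≤ μ k) {a b : ℕ} (ha : n ≤ a) (hab : a < b)
    (hE : ∀ m, a < m → m < b → m ∉ E) : μ a - μ b ≤ lamMu μ E n := by
  refine le_csSup ⟨μ n, ?_⟩ ⟨a, b, ha, hab, hE, rfl⟩
  rintro _ ⟨a', b', ha', -, -, rfl⟩
  linarith [hμ ha', hμpos b']

lemma lamMu_le_s12 {c : ℝ}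
    (h : ∀ a b, n ≤ a → a < b → (∀ m, a < m → m < b → m ∉ E) → μ a - μ b ≤ c) :
    lamMu μ E n ≤ c := by
  refine csSup_le ⟨μ n - μ (n + 1), n, n + 1, le_rfl, n.lt_succ_self, fun m h₁ h₂ => ?_, rfl⟩ ?_
  · omega
  · rintro _ ⟨a, b, ha, hab, hE, rfl⟩
    exact h a b ha hab hE

lemma lamMu_div_le_lamMu_div_add (hμ₁ : Antitone μ₁) (hμ₁pos : ∀ k, 0 < μ₁ k)
    (hμ₂pos : ∀ k, 0 < μ₂ k) {ε : ℝ}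
    (hn : ∀ m ≥ n, |μ₁ n * μ₂ m / (μ₂ n * μ₁ m) - 1| < ε) :
    lamMu μ₂ E n / μ₂ n ≤ lamMu μ₁ E n / μ₁ n + 2 * ε := by
  have hclose : ∀ m ≥ n, |μ₂ m / μ₂ n - μ₁ m / μ₁ n| < ε := fun m hm => by
    refine abs_sub_lt_of_abs_div_sub_one_lt (div_pos (hμ₁pos m) (hμ₁pos n))
      (div_le_one_of_le₀ (hμ₁ hm) (hμ₁pos n).le) ?_
    convert hn m hm using 3
    field_simp [(hμ₁pos m).ne', (hμ₁pos n).ne', (hμ₂pos n).ne']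
  rw [div_le_iff₀ (hμ₂pos n)]
  refine lamMu_le_s12 fun a b ha hab hE => ?_
  have hgap : (μ₁ a - μ₁ b) / μ₁ n ≤ lamMu μ₁ E n / μ₁ n :=
    div_le_div_of_nonneg_right (le_lamMu hμ₁ (fun k => (hμ₁pos k).le) ha hab hE) (hμ₁pos n).le
  have ha' := abs_lt.mp (hclose a ha)
  have hb' := abs_lt.mp (hclose b (ha.trans hab.le))
  calc μ₂ a - μ₂ b = (μ₂ a / μ₂ n - μ₂ b / μ₂ n) * μ₂ n := by field_simp [(hμ₂pos n).ne']
    _ ≤ ((μ₁ a - μ₁ b) / μ₁ n + 2 * ε) * μ₂ n := by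
      gcongr
      · exact (hμ₂pos n).le
      · rw [sub_div]; linarith
    _ ≤ (lamMu μ₁ E n / μ₁ n + 2 * ε) * μ₂ n := by gcongr; exact (hμ₂pos n).le

theorem DoubleLimitCondition.tendsto_lamMu_div_sub (h : DoubleLimitCondition μ₁ μ₂)
    (hμ₁ : Antitone μ₁) (hμ₁pos : ∀ k, 0 < μ₁ k) (hμ₂ : Antitone μ₂) (hμ₂pos : ∀ k, 0 < μ₂ k)
    (E : Set ℕ) :
    Tendsto (fun n => lamMu μ₂ E n / μ₂ n - lamMu μ₁ E n / μ₁ n) atTop (𝓝 0) := by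
  rw [Metric.tendsto_atTop]
  intro ε hε
  obtain ⟨N₁, hN₁⟩ := h (ε / 3) (by positivity)
  obtain ⟨N₂, hN₂⟩ := h.symm (ε / 3) (by positivity)
  refine ⟨max N₁ N₂, fun n hn => ?_⟩
  have h₁₂ := lamMu_div_le_lamMu_div_add (E := E) hμ₁ hμ₁pos hμ₂pos fun m hm =>
    hN₁ n (le_of_max_le_left hn) m ((le_of_max_le_left hn).trans hm)
  have h₂₁ := lamMu_div_le_lamMu_div_add (E := E) hμ₂ hμ₂pos hμ₁pos fun m hm =>
    hN₂ n (le_of_max_le_right hn) m ((le_of_max_le_right hn).trans hm)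
  rw [Real.dist_eq, sub_zero, abs_lt]
  constructor <;> linarith

lemma porosityNumbersInf_subset_of_tendsto_sub
    (h : Tendsto (fun n => lamMu μ₂ E n / μ₂ n - lamMu μ₁ E n / μ₁ n) atTop (𝓝 0)) :
    porosityNumbersInf μ₁ E ⊆ porosityNumbersInf μ₂ E := by
  rintro p ⟨φ, hφ, hp⟩
  exact ⟨φ, hφ, by simpa using (h.comp hφ.tendsto_atTop).add hp⟩

lemma porosityNumbersInf_eq_of_tendsto_sub
    (h : Tendsto (fun n => lamMu μ₂ E n / μ₂ n - lamMu μ₁ E n / μ₁ n) atTop (𝓝 0)) :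
    porosityNumbersInf μ₁ E = porosityNumbersInf μ₂ E :=
  (porosityNumbersInf_subset_of_tendsto_sub h).antisymm
    (porosityNumbersInf_subset_of_tendsto_sub (by simpa using h.neg))

end

theorem porosityNumbersInf_eq_of_double_limit_general
    (μ₁ μ₂ : ℕ → ℝ)
    (hμ₁anti : StrictAnti μ₁) (hμ₁pos : ∀ n, 0 < μ₁ n)
    (hμ₂anti : StrictAnti μ₂) (hμ₂pos : ∀ n, 0 < μ₂ n)
    (hlim : ∀ ε > (0 : ℝ), ∃ N : ℕ, ∀ n ≥ N, ∀ m ≥ N,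
      |μ₁ n * μ₂ m / (μ₂ n * μ₁ m) - 1| < ε)
    (E : Set ℕ) :
    porosityNumbersInf μ₁ E = porosityNumbersInf μ₂ E :=
  porosityNumbersInf_eq_of_tendsto_sub <| DoubleLimitCondition.tendsto_lamMu_div_sub hlim
    hμ₁anti.antitone hμ₁pos hμ₂anti.antitone hμ₂pos E

theorem porosityNumbersInf_eq_of_double_limit
    (μ₁ μ₂ : ℕ → ℝ)
    (hμ₁anti : StrictAnti μ₁) (hμ₁pos : ∀ n, 0 < μ₁ n) (hμ₁0 : Tendsto μ₁ atTop (nhds 0))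
    (hμ₂anti : StrictAnti μ₂) (hμ₂pos : ∀ n, 0 < μ₂ n) (hμ₂0 : Tendsto μ₂ atTop (nhds 0))
    (hlim : ∀ ε > (0 : ℝ), ∃ N : ℕ, ∀ n ≥ N, ∀ m ≥ N,
      |μ₁ n * μ₂ m / (μ₂ n * μ₁ m) - 1| < ε)
    (E : Set ℕ) :
    porosityNumbersInf μ₁ E = porosityNumbersInf μ₂ E :=
  porosityNumbersInf_eq_of_double_limit_general μ₁ μ₂ hμ₁anti hμ₁pos hμ₂anti hμ₂pos hlim E
end
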